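/- Let q ≥ 1, let γ₁ > ⋯ > γ_q be nonzero reals with γ₁ > 0, let δ = (δ₁, …, δ_q) with δᵢ ≥ 0, ε ≥ 0, k* ∈ ℝ, and form the regular dimension-reduced data: Δ = diag(γ₁, …, γ_q), d = 0, w₀ = δ when ε = 0, or Δ = diag(0, γ₁, …, γ_q), d = ε·e₁, w₀ = (0, δ) when ε > 0. Let W := {w : wᵀΔw + 2dᵀw = k*} be nonempty, Λ° := (−∞, 1/γ₁) if γ_q > 0 and (1/γ_q, 1/γ₁) if γ_q < 0, f(λ) := Σᵢ γᵢδᵢ²/(1 − λγᵢ)² + 2ε²λ − k*, W(λ) := {w ∈ W : (I − λΔ)w = w₀ + λd}, W∘ := ⋃_{λ∈Λ°} W(λ), W₁ := W(1/γ₁), and, when γ_q < 0, W_q := W(1/γ_q). Suppose the problem is singly-Lagrangian, i.e. either [ε = 0, k* = 0, δ ≠ 0 and γ_q < 0], or [ε = 0 and k* ≠ 0], or ε > 0. Then exactly one of the sets W∘, W₁ (and W_q when γ_q < 0) is nonempty, and that nonempty set equals the set of global minimisers of ‖w − w₀‖² over W. Specifically: if γ_q > 0 then inf_{Λ°} f <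 0 and the minimiser set is W∘ or W₁ according as sup_{Λ°} f > 0 or sup_{Λ°} f ≤ 0; if γ_q < 0 then the minimiser set is W∘, W₁ or W_q according as inf_{Λ°} f < 0 < sup_{Λ°} f, sup_{Λ°} f ≤ 0, or inf_{Λ°} f ≥ 0. -/

import Mathlib

/-!
If `t ∈ W` solves the normal equations with multiplier `λ`, expanding the Lagrangian gives
`‖w - w₀‖² - ‖t - w₀‖² = (w - t)ᵀ (I - λΔ) (w - t)` for every `w ∈ W`. Hence, when `I - λΔ ⪰ 0`,
`W(λ)` is exactly the set of minimisers. Two such multipliers with nonempty `W(λ)` would share a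
point, which forces `w₀ ∈ W` and `Δ w₀ + d = 0`: the multiply-Lagrangian case. So it suffices to
exhibit one admissible `λ` with `W(λ) ≠ ∅`.

On the canonical form the normal equations are solved by `w(λ) = (λε, δᵢ / (1 - λγᵢ))`, at which
the constraint function equals `f(λ)`. A sign change of `f` on `Λ°` gives a zero, hence a point of
`W∘`. Otherwise `f` has constant sign on `Λ°`; as `f / γⱼ → +∞` at the pole `1 / γⱼ` unless
`δⱼ = 0`, the sign forces `δⱼ = 0` at the relevant end, and the then free `j`-th coordinate can be
chosen to make `w` feasible, giving a point of `W₁` or `W_q`.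
-/

open Matrix Filter Set Topology

namespace QuadricProjection

variable {ι : Type*} [Fintype ι] [DecidableEq ι]

def quadric (Δ : Matrix ι ι ℝ) (d : ι → ℝ) (k : ℝ) : Set (ι → ℝ) :=
  {w | w ⬝ᵥ Δ *ᵥ w + 2 * (d ⬝ᵥ w) = k}

def lagrangianSet (Δ : Matrix ι ι ℝ) (d w₀ : ι → ℝ) (k lam : ℝ) : Set (ι → ℝ) :=
  {w ∈ quadric Δ d k | (1 - lam • Δ) *ᵥ w = w₀ + lam • d}

def minimizers (Δ : Matrix ι ι ℝ) (d w₀ : ι → ℝ) (k : ℝ) : Set (ι → ℝ) :=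
  {w ∈ quadric Δ d k | ∀ w' ∈ quadric Δ d k, (w - w₀) ⬝ᵥ (w - w₀) ≤ (w' - w₀) ⬝ᵥ (w' - w₀)}

variable {Δ : Matrix ι ι ℝ} {d w₀ : ι → ℝ} {k lam : ℝ}

theorem sqDist_sub_sqDist_eq (hΔ : Δ.IsSymm) {w t : ι → ℝ} (hw : w ∈ quadric Δ d k)
    (ht : t ∈ lagrangianSet Δ d w₀ k lam) :
    (w - w₀) ⬝ᵥ (w - w₀) - (t - w₀) ⬝ᵥ (t - w₀) = (w - t) ⬝ᵥ (1 - lam • Δ) *ᵥ (w - t) := by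
  obtain ⟨htQ, htN⟩ := ht
  have hsymm : w ⬝ᵥ Δ *ᵥ t = t ⬝ᵥ Δ *ᵥ w := by
    rw [dotProduct_mulVec, ← mulVec_transpose, hΔ.eq, dotProduct_comm]
  have hNw := congrArg (w ⬝ᵥ ·) htN
  have hNt := congrArg (t ⬝ᵥ ·) htN
  simp only [sub_mulVec, one_mulVec, smul_mulVec, dotProduct_sub, dotProduct_add,
    dotProduct_smul, smul_eq_mul] at hNw hNt
  simp only [sub_mulVec, one_mulVec, smul_mulVec, mulVec_sub, dotProduct_sub, sub_dotProduct,
    dotProduct_smul, smul_eq_mul, dotProduct_comm w₀, dotProduct_comm t w]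
  simp only [quadric, mem_ofPred_eq, dotProduct_comm d] at hw htQ
  linear_combination 2 * hNw - 2 * hNt + lam * hw - lam * htQ + lam * hsymm

theorem minimizers_eq_lagrangianSet (hΔ : Δ.IsSymm) (hA : (1 - lam • Δ).PosSemidef)
    (hne : (lagrangianSet Δ d w₀ k lam).Nonempty) :
    minimizers Δ d w₀ k = lagrangianSet Δ d w₀ k lam := by
  obtain ⟨t, ht⟩ := hne
  have hA' : ∀ x, 0 ≤ x ⬝ᵥ (1 - lam • Δ) *ᵥ x := hA.dotProduct_mulVec_nonneg
  ext w
  constructor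
  · rintro ⟨hw, hmin⟩
    have hzero : (w - t) ⬝ᵥ (1 - lam • Δ) *ᵥ (w - t) = 0 :=
      le_antisymm (by linarith [hmin t ht.1, sqDist_sub_sqDist_eq hΔ hw ht]) (hA' (w - t))
    have hker := (hA.dotProduct_mulVec_zero_iff (w - t)).1 hzero
    rw [mulVec_sub, sub_eq_zero, ht.2] at hker
    exact ⟨hw, hker⟩
  · intro hw
    refine ⟨hw.1, fun w' hw' => ?_⟩
    linarith [sqDist_sub_sqDist_eq hΔ hw' hw, hA' (w' - w)]

theorem sub_eq_smul_of_mem_lagrangianSet {w : ι → ℝ} (hw : w ∈ lagrangianSet Δ d w₀ k lam) :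
    w - w₀ = lam • (Δ *ᵥ w + d) := by
  have h := hw.2
  rw [sub_mulVec, one_mulVec, smul_mulVec] at h
  linear_combination (norm := module) h

theorem eq_of_mem_lagrangianSet_of_ne {μ : ℝ} {w : ι → ℝ} (hlam : w ∈ lagrangianSet Δ d w₀ k lam)
    (hμ : w ∈ lagrangianSet Δ d w₀ k μ) (hne : lam ≠ μ) : w = w₀ ∧ Δ *ᵥ w₀ + d = 0 := by
  have h := (sub_eq_smul_of_mem_lagrangianSet hlam).symm.trans (sub_eq_smul_of_mem_lagrangianSet hμ)
  rw [← sub_eq_zero, ← sub_smul, smul_eq_zero, sub_eq_zero] at h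
  have hcrit := h.resolve_left hne
  have hw : w = w₀ := by
    rw [← sub_eq_zero, sub_eq_smul_of_mem_lagrangianSet hlam, hcrit, smul_zero]
  exact ⟨hw, hw ▸ hcrit⟩

theorem lagrangianSet_eq_empty_of_ne (hΔ : Δ.IsSymm)
    (hcrit : ¬ (w₀ ∈ quadric Δ d k ∧ Δ *ᵥ w₀ + d = 0)) {μ : ℝ}
    (hlam : (1 - lam • Δ).PosSemidef) (hμ : (1 - μ • Δ).PosSemidef) (hne : lam ≠ μ)
    (hlam_ne : (lagrangianSet Δ d w₀ k lam).Nonempty) : lagrangianSet Δ d w₀ k μ = ∅ := by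
  refine Set.eq_empty_iff_forall_notMem.2 fun v hv => hcrit ?_
  obtain ⟨w, hw⟩ := hlam_ne
  have hwμ : w ∈ lagrangianSet Δ d w₀ k μ := by
    rw [← minimizers_eq_lagrangianSet hΔ hμ ⟨v, hv⟩, minimizers_eq_lagrangianSet hΔ hlam ⟨w, hw⟩]
    exact hw
  obtain ⟨rfl, h⟩ := eq_of_mem_lagrangianSet_of_ne hw hwμ hne
  exact ⟨hw.1, h⟩

theorem minimizers_eq_biUnion_lagrangianSet (hΔ : Δ.IsSymm)
    (hcrit : ¬ (w₀ ∈ quadric Δ d k ∧ Δ *ᵥ w₀ + d = 0)) {Λ : Set ℝ}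
    (hΛ : ∀ μ ∈ Λ, (1 - μ • Δ).PosSemidef) (hlam : lam ∈ Λ)
    (hne : (lagrangianSet Δ d w₀ k lam).Nonempty) :
    minimizers Δ d w₀ k = ⋃ μ ∈ Λ, lagrangianSet Δ d w₀ k μ := by
  rw [minimizers_eq_lagrangianSet hΔ (hΛ lam hlam) hne]
  refine subset_antisymm (subset_biUnion_of_mem hlam) (iUnion₂_subset fun μ hμ => ?_)
  rcases eq_or_ne μ lam with rfl | hμlam
  · rfl
  · rw [lagrangianSet_eq_empty_of_ne hΔ hcrit (hΛ lam hlam) (hΛ μ hμ) hμlam.symm hne]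
    exact empty_subset _

theorem biUnion_lagrangianSet_eq_empty (hΔ : Δ.IsSymm)
    (hcrit : ¬ (w₀ ∈ quadric Δ d k ∧ Δ *ᵥ w₀ + d = 0)) {Λ : Set ℝ}
    (hΛ : ∀ μ ∈ Λ, (1 - μ • Δ).PosSemidef) (hlam : (1 - lam • Δ).PosSemidef) (hlamΛ : lam ∉ Λ)
    (hne : (lagrangianSet Δ d w₀ k lam).Nonempty) :
    ⋃ μ ∈ Λ, lagrangianSet Δ d w₀ k μ = ∅ :=
  iUnion_eq_empty.2 fun μ => iUnion_eq_empty.2 fun hμ =>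
    lagrangianSet_eq_empty_of_ne hΔ hcrit hlam (hΛ μ hμ) (ne_of_mem_of_not_mem hμ hlamΛ).symm hne

end QuadricProjection

open QuadricProjection

theorem mul_le_max_of_mem_Icc {a b g : ℝ} (μ : ℝ) (hg : g ∈ Icc a b) :
    μ * g ≤ max (μ * a) (μ * b) := by
  rcases le_total 0 μ with h | h
  · exact le_max_of_le_right (mul_le_mul_of_nonneg_left hg.2 h)
  · exact le_max_of_le_left (mul_le_mul_of_nonpos_left hg.1 h)

namespace CanonicalForm

/- Coordinates `Fin m ⊕ Fin q`: the leading `Fin m` coordinates carry the linear term `ε` (in the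
canonical form `m ≤ 1`); the hypothesis `(m : ℝ) * ε ^ 2 = ε ^ 2` records that there is exactly one
of them when `ε ≠ 0`. -/

variable {m q : ℕ}

def Δ (γ : Fin q → ℝ) : Matrix (Fin m ⊕ Fin q) (Fin m ⊕ Fin q) ℝ :=
  diagonal (Sum.elim (fun _ => 0) γ)

def d (m : ℕ) (ε : ℝ) : Fin m ⊕ Fin q → ℝ := Sum.elim (fun _ => ε) (fun _ => 0)

def w₀ (δ : Fin q → ℝ) : Fin m ⊕ Fin q → ℝ := Sum.elim (fun _ => 0) δ

/-- `secular γ δ ε k lam + k` is the value of the constraint function at the solution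
`(lam * ε, δ i / (1 - lam * γ i))` of the normal equations. -/
noncomputable def secular (γ δ : Fin q → ℝ) (ε k lam : ℝ) : ℝ :=
  (∑ i, γ i * δ i ^ 2 / (1 - lam * γ i) ^ 2) + 2 * ε ^ 2 * lam - k

variable {γ δ : Fin q → ℝ} {ε k lam : ℝ}

theorem isSymm_Δ : (Δ (m := m) γ).IsSymm := isSymm_diagonal _

theorem posSemidef_one_sub_smul_Δ (h : ∀ i, lam * γ i ≤ 1) :
    (1 - lam • Δ (m := m) γ).PosSemidef := by
  rw [Δ, ← diagonal_one, ← diagonal_smul, diagonal_sub, posSemidef_diagonal_iff]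
  rintro (a | i)
  · simp
  · simpa using h i

theorem eq_zero_of_critical (hγ : ∀ i, γ i ≠ 0) (hm : m = 0 → ε = 0)
    (h : w₀ δ ∈ quadric (Δ γ) (d m ε) k ∧ Δ γ *ᵥ w₀ δ + d m ε = 0) :
    ε = 0 ∧ k = 0 ∧ δ = 0 := by
  obtain ⟨hQ, hcrit⟩ := h
  have hε : ε = 0 := by
    rcases Nat.eq_zero_or_pos m with hm0 | hm0
    · exact hm hm0
    · simpa [Δ, d, w₀, mulVec_diagonal] using congrFun hcrit (Sum.inl ⟨0, hm0⟩)
  have hδ : δ = 0 := funext fun i => by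
    simpa [Δ, d, w₀, mulVec_diagonal, hγ i] using congrFun hcrit (Sum.inr i)
  refine ⟨hε, ?_, hδ⟩
  simpa [quadric, Δ, d, w₀, mulVec_diagonal, dotProduct, hδ, hε, eq_comm] using hQ

theorem mem_lagrangianSet (hm : (m : ℝ) * ε ^ 2 = ε ^ 2) {v : Fin q → ℝ}
    (hv : ∀ i, (1 - lam * γ i) * v i = δ i) (hk : ∑ i, γ i * v i ^ 2 + 2 * ε ^ 2 * lam = k) :
    Sum.elim (fun _ => lam * ε) v ∈ lagrangianSet (Δ γ) (d m ε) (w₀ δ) k lam := by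
  refine ⟨?_, ?_⟩
  · simp only [quadric, dotProduct, Δ, mulVec_diagonal, Fintype.sum_sum_type, Sum.elim_inl,
      zero_mul, mul_zero, Finset.sum_const_zero, Sum.elim_inr, zero_add, d, add_zero,
      mem_ofPred_eq, Finset.sum_const, Finset.card_univ, Fintype.card_fin, nsmul_eq_mul]
    have hsum : ∑ i, v i * (γ i * v i) = ∑ i, γ i * v i ^ 2 :=
      Finset.sum_congr rfl fun i _ => by ring
    rw [hsum]
    linear_combination hk + 2 * lam * hm
  · ext (a | i)
    · simp [Δ, d, w₀, sub_mulVec, smul_mulVec, mulVec_diagonal]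
    · simpa [Δ, d, w₀, sub_mulVec, smul_mulVec, mulVec_diagonal, sub_mul, mul_assoc] using hv i

theorem zero_le_of_quadric_nonempty (hγ : ∀ i, 0 ≤ γ i) (hε : ε = 0)
    (h : (quadric (Δ γ) (d m ε) k).Nonempty) : 0 ≤ k := by
  obtain ⟨w, hw⟩ := h
  simp only [quadric, dotProduct, Δ, d, hε, mulVec_diagonal, Fintype.sum_sum_type, Sum.elim_inl,
    Sum.elim_inr, zero_mul, mul_zero, Finset.sum_const_zero, zero_add, add_zero,
    mem_ofPred_eq] at hw
  rw [← hw]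
  exact Finset.sum_nonneg fun i _ => by nlinarith [hγ i, mul_self_nonneg (w (Sum.inr i))]

theorem lagrangianSet_nonempty_of_secular_eq_zero (hm : (m : ℝ) * ε ^ 2 = ε ^ 2)
    (hc : ∀ i, 1 - lam * γ i ≠ 0) (hf : secular γ δ ε k lam = 0) :
    (lagrangianSet (Δ γ) (d m ε) (w₀ δ) k lam).Nonempty := by
  refine ⟨_, mem_lagrangianSet hm (v := fun i => δ i / (1 - lam * γ i))
    (fun i => mul_div_cancel₀ _ (hc i)) ?_⟩
  simp only [div_pow, ← mul_div_assoc]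
  unfold secular at hf
  linarith

theorem one_sub_inv_mul_ne_zero (hinj : Function.Injective γ) {i j : Fin q} (hγ : γ j ≠ 0)
    (hij : i ≠ j) : 1 - (γ j)⁻¹ * γ i ≠ 0 := by
  rw [sub_ne_zero, ne_comm, Ne, inv_mul_eq_one₀ hγ]
  exact fun h => hij (hinj h.symm)

/- At `lam = (γ j)⁻¹` the `j`-th normal equation reads `0 = δ j`, so the `j`-th coordinate is free;
it is chosen to put the point on the quadric. -/
theorem lagrangianSet_inv_nonempty (hm : (m : ℝ) * ε ^ 2 = ε ^ 2) (hinj : Function.Injective γ)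
    {j : Fin q} (hγ : γ j ≠ 0) (hδ : δ j = 0) (hf : secular γ δ ε k (γ j)⁻¹ / γ j ≤ 0) :
    (lagrangianSet (Δ γ) (d m ε) (w₀ δ) k (γ j)⁻¹).Nonempty := by
  set c := (γ j)⁻¹
  set s := √(-(secular γ δ ε k c / γ j))
  set v := Function.update (fun i => δ i / (1 - c * γ i)) j s
  have hv : ∀ i, γ i * v i ^ 2 =
      γ i * δ i ^ 2 / (1 - c * γ i) ^ 2 + if i = j then γ j * s ^ 2 else 0 := by
    intro i
    rcases eq_or_ne i j with rfl | hij
    · simp [v, hδ]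
    · simp [v, hij, div_pow, mul_div_assoc]
  refine ⟨_, mem_lagrangianSet hm (v := v) (fun i => ?_) ?_⟩
  · rcases eq_or_ne i j with rfl | hij
    · simp [c, inv_mul_cancel₀ hγ, hδ]
    · rw [show v i = δ i / (1 - c * γ i) from Function.update_of_ne hij _ _]
      exact mul_div_cancel₀ _ (one_sub_inv_mul_ne_zero hinj hγ hij)
  · have hs : γ j * s ^ 2 = -secular γ δ ε k c := by
      rw [Real.sq_sqrt (by linarith)]
      field_simp
    simp only [hv, Finset.sum_add_distrib, Finset.sum_ite_eq', Finset.mem_univ, if_true, hs]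
    unfold secular
    ring

theorem continuousAt_secular {c : ℝ} (hc : ∀ i, 1 - c * γ i ≠ 0 ∨ δ i = 0) :
    ContinuousAt (secular γ δ ε k) c := by
  have hsum : ContinuousAt (fun lam => ∑ i, γ i * δ i ^ 2 / (1 - lam * γ i) ^ 2) c := by
    refine tendsto_finsetSum _ fun i _ => ?_
    rcases hc i with h | h
    · exact ContinuousAt.div (by fun_prop) (by fun_prop) (pow_ne_zero 2 h)
    · simp [h]
  exact (hsum.add (by fun_prop)).sub continuousAt_const

theorem continuousAt_secular_inv (hinj : Function.Injective γ) {j : Fin q} (hγ : γ j ≠ 0)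
    (hδ : δ j = 0) : ContinuousAt (secular γ δ ε k) (γ j)⁻¹ :=
  continuousAt_secular fun i => (eq_or_ne i j).elim (fun h => Or.inr (h ▸ hδ))
    fun h => Or.inl (one_sub_inv_mul_ne_zero hinj hγ h)

theorem secular_eq_add_update (j : Fin q) (lam : ℝ) :
    secular γ δ ε k lam =
      γ j * δ j ^ 2 / (1 - lam * γ j) ^ 2 + secular γ (Function.update δ j 0) ε k lam := by
  have hrest : ∑ i ∈ Finset.univ.erase j, γ i * Function.update δ j 0 i ^ 2 / (1 - lam * γ i) ^ 2
      = ∑ i ∈ Finset.univ.erase j, γ i * δ i ^ 2 / (1 - lam * γ i) ^ 2 :=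
    Finset.sum_congr rfl fun i hi => by rw [Function.update_of_ne (Finset.ne_of_mem_erase hi)]
  simp only [secular, ← Finset.add_sum_erase _ _ (Finset.mem_univ j), Function.update_self, hrest]
  ring

theorem tendsto_secular_div_atTop (hinj : Function.Injective γ) {j : Fin q} (hγ : γ j ≠ 0)
    (hδ : δ j ≠ 0) :
    Tendsto (fun lam => secular γ δ ε k lam / γ j) (𝓝[≠] (γ j)⁻¹) atTop := by
  have hsq : Tendsto (fun lam => (1 - lam * γ j) ^ 2) (𝓝[≠] (γ j)⁻¹) (𝓝[>] 0) := by
    refine tendsto_nhdsWithin_iff.2 ⟨?_, ?_⟩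
    · have : ContinuousAt (fun lam => (1 - lam * γ j) ^ 2) (γ j)⁻¹ := by fun_prop
      simpa [inv_mul_cancel₀ hγ] using this.tendsto.mono_left nhdsWithin_le_nhds
    · filter_upwards [self_mem_nhdsWithin] with lam hlam
      exact sq_pos_of_ne_zero fun h => hlam ((mul_eq_one_iff_eq_inv₀ hγ).1 (sub_eq_zero.1 h).symm)
  have hpole : Tendsto (fun lam => δ j ^ 2 * ((1 - lam * γ j) ^ 2)⁻¹) (𝓝[≠] (γ j)⁻¹) atTop :=
    (tendsto_inv_nhdsGT_zero.comp hsq).const_mul_atTop (by positivity)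
  have hrest : Tendsto (fun lam => secular γ (Function.update δ j 0) ε k lam / γ j)
      (𝓝[≠] (γ j)⁻¹) (𝓝 (secular γ (Function.update δ j 0) ε k (γ j)⁻¹ / γ j)) :=
    ((continuousAt_secular_inv hinj hγ (Function.update_self j 0 δ)).tendsto.mono_left
      nhdsWithin_le_nhds).div_const (γ j)
  refine (hpole.atTop_add hrest).congr fun lam => ?_
  rw [secular_eq_add_update (δ := δ) j, add_div, div_right_comm, mul_div_cancel_left₀ _ hγ,
    ← div_eq_mul_inv]

/- Dividing by `γ j` treats both ends of `Λ°` alike: `f / γ j → +∞` at the pole unless `δ j = 0`. -/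
theorem eq_zero_and_secular_inv_div_nonpos (hinj : Function.Injective γ) {j : Fin q} (hγ : γ j ≠ 0)
    {s : Set ℝ} (hs : (γ j)⁻¹ ∉ s) (hs' : (𝓝[s] (γ j)⁻¹).NeBot)
    (hf : ∀ lam ∈ s, secular γ δ ε k lam / γ j ≤ 0) :
    δ j = 0 ∧ secular γ δ ε k (γ j)⁻¹ / γ j ≤ 0 := by
  have hle : ∀ᶠ lam in 𝓝[s] (γ j)⁻¹, secular γ δ ε k lam / γ j ≤ 0 :=
    eventually_mem_nhdsWithin.mono hf
  have hδ : δ j = 0 := by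
    by_contra hδ
    have hsub : 𝓝[s] (γ j)⁻¹ ≤ 𝓝[≠] (γ j)⁻¹ := nhdsWithin_mono _ fun x hx h => hs (h ▸ hx)
    have hpos := ((tendsto_secular_div_atTop (ε := ε) (k := k) hinj hγ hδ).mono_left
      hsub).eventually_gt_atTop 0
    obtain ⟨lam, hpos, hnonpos⟩ := (hpos.and hle).exists
    exact hnonpos.not_gt hpos
  refine ⟨hδ, le_of_tendsto ?_ hle⟩
  exact ((continuousAt_secular_inv hinj hγ hδ).tendsto.mono_left nhdsWithin_le_nhds).div_const _

theorem eventually_secular_neg_atBot (hγ : ∀ i, 0 < γ i) (h : 0 < ε ∨ 0 < k) :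
    ∀ᶠ lam in atBot, secular γ δ ε k lam < 0 := by
  have hsum : Tendsto (fun lam => ∑ i, γ i * δ i ^ 2 / (1 - lam * γ i) ^ 2) atBot (𝓝 0) := by
    have hden : ∀ i, Tendsto (fun lam => (1 - lam * γ i) ^ 2) atBot atTop := fun i => by
      have hlin := tendsto_neg_atBot_atTop.comp (tendsto_id.atBot_mul_const (hγ i))
      refine (tendsto_pow_atTop two_ne_zero).comp ?_
      simpa [sub_eq_add_neg] using tendsto_atTop_add_const_left _ 1 hlin
    simpa using tendsto_finsetSum Finset.univ fun i _ => tendsto_const_nhds.div_atTop (hden i)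
  unfold secular
  rcases h with hε | hk
  · filter_upwards [hsum.eventually (eventually_lt_nhds one_pos),
      eventually_lt_atBot ((k - 1) / (2 * ε ^ 2))] with lam h1 h2
    rw [lt_div_iff₀ (by positivity)] at h2
    linarith
  · filter_upwards [hsum.eventually (eventually_lt_nhds hk), eventually_le_atBot 0] with lam h1 h2
    nlinarith [sq_nonneg ε]

theorem exists_lagrangianSet_nonempty_of_sign_change (hm : (m : ℝ) * ε ^ 2 = ε ^ 2) {s : Set ℝ}
    (hs : IsPreconnected s) (hc : ∀ lam ∈ s, ∀ i, lam * γ i < 1) {a b : ℝ} (ha : a ∈ s)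
    (hb : b ∈ s) (hfa : secular γ δ ε k a < 0) (hfb : 0 < secular γ δ ε k b) :
    ∃ lam ∈ s, (lagrangianSet (Δ γ) (d m ε) (w₀ δ) k lam).Nonempty := by
  have hc' : ∀ lam ∈ s, ∀ i, 1 - lam * γ i ≠ 0 := fun lam hlam i =>
    (sub_pos.2 (hc lam hlam i)).ne'
  have hcont : ContinuousOn (secular γ δ ε k) s := fun lam hlam =>
    (continuousAt_secular fun i => Or.inl (hc' lam hlam i)).continuousWithinAt
  obtain ⟨lam, hlam, hf⟩ := hs.intermediate_value ha hb hcont ⟨hfa.le, hfb.le⟩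
  exact ⟨lam, hlam, lagrangianSet_nonempty_of_secular_eq_zero hm (hc' lam hlam) hf⟩

theorem resolution_of_pos (hm : (m : ℝ) * ε ^ 2 = ε ^ 2) (hinj : Function.Injective γ)
    (hcrit : ¬ (w₀ δ ∈ quadric (Δ γ) (d m ε) k ∧ Δ γ *ᵥ w₀ δ + d m ε = 0))
    {j : Fin q} (hγ : ∀ i, γ i ∈ Ioc 0 (γ j)) (hεk : 0 < ε ∨ 0 < k)
    {Λ : Set ℝ} (hΛ : Λ = Iio (γ j)⁻¹) :
    (∃ lam ∈ Λ, secular γ δ ε k lam < 0) ∧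
    ((∃ lam ∈ Λ, 0 < secular γ δ ε k lam) →
      minimizers (Δ γ) (d m ε) (w₀ δ) k = ⋃ lam ∈ Λ, lagrangianSet (Δ γ) (d m ε) (w₀ δ) k lam ∧
      lagrangianSet (Δ γ) (d m ε) (w₀ δ) k (γ j)⁻¹ = ∅) ∧
    ((∀ lam ∈ Λ, secular γ δ ε k lam ≤ 0) →
      minimizers (Δ γ) (d m ε) (w₀ δ) k = lagrangianSet (Δ γ) (d m ε) (w₀ δ) k (γ j)⁻¹ ∧
      ⋃ lam ∈ Λ, lagrangianSet (Δ γ) (d m ε) (w₀ δ) k lam = ∅) := by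
  subst hΛ
  have hγj : 0 < γ j := (hγ j).1
  have hlt_one : ∀ lam ∈ Iio (γ j)⁻¹, ∀ i, lam * γ i < 1 := fun lam hlam i =>
    (mul_le_max_of_mem_Icc lam (Ioc_subset_Icc_self (hγ i))).trans_lt
      (max_lt (by simp) (by rwa [mem_Iio, ← one_div, lt_div_iff₀ hγj] at hlam))
  have hpsd : ∀ lam ∈ Iio (γ j)⁻¹, (1 - lam • Δ (m := m) γ).PosSemidef := fun lam hlam =>
    posSemidef_one_sub_smul_Δ fun i => (hlt_one lam hlam i).le
  have hpsd₁ : (1 - (γ j)⁻¹ • Δ (m := m) γ).PosSemidef :=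
    posSemidef_one_sub_smul_Δ fun i => (inv_mul_le_one₀ hγj).2 (hγ i).2
  have hneg : ∃ lam ∈ Iio (γ j)⁻¹, secular γ δ ε k lam < 0 :=
    ((eventually_secular_neg_atBot (fun i => (hγ i).1) hεk).and
      (eventually_lt_atBot _)).exists.imp fun _ h => ⟨h.2, h.1⟩
  refine ⟨hneg, fun ⟨b, hb, hfb⟩ => ?_, fun hf => ?_⟩
  · obtain ⟨a, ha, hfa⟩ := hneg
    obtain ⟨lam, hlam, hne⟩ :=
      exists_lagrangianSet_nonempty_of_sign_change hm isPreconnected_Iio hlt_one ha hb hfa hfb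
    exact ⟨minimizers_eq_biUnion_lagrangianSet isSymm_Δ hcrit hpsd hlam hne,
      lagrangianSet_eq_empty_of_ne isSymm_Δ hcrit (hpsd lam hlam) hpsd₁ (ne_of_lt hlam) hne⟩
  · obtain ⟨hδ, hf₁⟩ := eq_zero_and_secular_inv_div_nonpos (s := Iio _) hinj hγj.ne' (by simp)
      (by infer_instance) fun lam hlam => div_nonpos_of_nonpos_of_nonneg (hf lam hlam) hγj.le
    have hne := lagrangianSet_inv_nonempty hm hinj hγj.ne' hδ hf₁
    exact ⟨minimizers_eq_lagrangianSet isSymm_Δ hpsd₁ hne,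
      biUnion_lagrangianSet_eq_empty isSymm_Δ hcrit hpsd hpsd₁ (by simp) hne⟩

theorem resolution_of_neg (hm : (m : ℝ) * ε ^ 2 = ε ^ 2) (hinj : Function.Injective γ)
    (hcrit : ¬ (w₀ δ ∈ quadric (Δ γ) (d m ε) k ∧ Δ γ *ᵥ w₀ δ + d m ε = 0))
    {j jq : Fin q} (hγ : ∀ i, γ i ∈ Icc (γ jq) (γ j)) (hγj : 0 < γ j) (hγq : γ jq < 0)
    {Λ : Set ℝ} (hΛ : Λ = Ioo (γ jq)⁻¹ (γ j)⁻¹) :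
    ((∃ lam ∈ Λ, secular γ δ ε k lam < 0) ∧ (∃ lam ∈ Λ, 0 < secular γ δ ε k lam) →
      minimizers (Δ γ) (d m ε) (w₀ δ) k = ⋃ lam ∈ Λ, lagrangianSet (Δ γ) (d m ε) (w₀ δ) k lam ∧
      lagrangianSet (Δ γ) (d m ε) (w₀ δ) k (γ j)⁻¹ = ∅ ∧
      lagrangianSet (Δ γ) (d m ε) (w₀ δ) k (γ jq)⁻¹ = ∅) ∧
    ((∀ lam ∈ Λ, secular γ δ ε k lam ≤ 0) →
      minimizers (Δ γ) (d m ε) (w₀ δ) k = lagrangianSet (Δ γ) (d m ε) (w₀ δ) k (γ j)⁻¹ ∧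
      ⋃ lam ∈ Λ, lagrangianSet (Δ γ) (d m ε) (w₀ δ) k lam = ∅ ∧
      lagrangianSet (Δ γ) (d m ε) (w₀ δ) k (γ jq)⁻¹ = ∅) ∧
    ((∀ lam ∈ Λ, 0 ≤ secular γ δ ε k lam) →
      minimizers (Δ γ) (d m ε) (w₀ δ) k = lagrangianSet (Δ γ) (d m ε) (w₀ δ) k (γ jq)⁻¹ ∧
      ⋃ lam ∈ Λ, lagrangianSet (Δ γ) (d m ε) (w₀ δ) k lam = ∅ ∧
      lagrangianSet (Δ γ) (d m ε) (w₀ δ) k (γ j)⁻¹ = ∅) := by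
  subst hΛ
  have hlt : (γ jq)⁻¹ < (γ j)⁻¹ := (inv_lt_zero.2 hγq).trans (inv_pos.2 hγj)
  have hadm : ∀ lam, lam * γ jq ≤ 1 → lam * γ j ≤ 1 → (1 - lam • Δ (m := m) γ).PosSemidef :=
    fun lam hq h₁ => posSemidef_one_sub_smul_Δ fun i =>
      (mul_le_max_of_mem_Icc lam (hγ i)).trans (max_le hq h₁)
  have hlt_one : ∀ lam ∈ Ioo (γ jq)⁻¹ (γ j)⁻¹, ∀ i, lam * γ i < 1 := fun lam hlam i =>
    (mul_le_max_of_mem_Icc lam (hγ i)).trans_lt (max_lt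
      (by have := hlam.1; rwa [← one_div, div_lt_iff_of_neg hγq] at this)
      (by have := hlam.2; rwa [← one_div, lt_div_iff₀ hγj] at this))
  have hpsd : ∀ lam ∈ Ioo (γ jq)⁻¹ (γ j)⁻¹, (1 - lam • Δ (m := m) γ).PosSemidef := fun lam hlam =>
    hadm lam (hlt_one lam hlam jq).le (hlt_one lam hlam j).le
  have hpsd₁ : (1 - (γ j)⁻¹ • Δ (m := m) γ).PosSemidef :=
    hadm _ ((inv_mul_le_one₀ hγj).2 (hγ jq).2) (inv_mul_cancel₀ hγj.ne').le
  have hpsdq : (1 - (γ jq)⁻¹ • Δ (m := m) γ).PosSemidef :=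
    hadm _ (inv_mul_cancel₀ hγq.ne).le
      ((mul_neg_of_neg_of_pos (inv_lt_zero.2 hγq) hγj).le.trans zero_le_one)
  refine ⟨fun ⟨⟨a, ha, hfa⟩, ⟨b, hb, hfb⟩⟩ => ?_, fun hf => ?_, fun hf => ?_⟩
  · obtain ⟨lam, hlam, hne⟩ :=
      exists_lagrangianSet_nonempty_of_sign_change hm isPreconnected_Ioo hlt_one ha hb hfa hfb
    exact ⟨minimizers_eq_biUnion_lagrangianSet isSymm_Δ hcrit hpsd hlam hne,
      lagrangianSet_eq_empty_of_ne isSymm_Δ hcrit (hpsd lam hlam) hpsd₁ hlam.2.ne hne,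
      lagrangianSet_eq_empty_of_ne isSymm_Δ hcrit (hpsd lam hlam) hpsdq hlam.1.ne' hne⟩
  · obtain ⟨hδ, hf₁⟩ := eq_zero_and_secular_inv_div_nonpos hinj hγj.ne' (by simp)
      (by rw [nhdsWithin_Ioo_eq_nhdsLT hlt]; infer_instance)
      fun lam hlam => div_nonpos_of_nonpos_of_nonneg (hf lam hlam) hγj.le
    have hne := lagrangianSet_inv_nonempty hm hinj hγj.ne' hδ hf₁
    exact ⟨minimizers_eq_lagrangianSet isSymm_Δ hpsd₁ hne,
      biUnion_lagrangianSet_eq_empty isSymm_Δ hcrit hpsd hpsd₁ (by simp) hne,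
      lagrangianSet_eq_empty_of_ne isSymm_Δ hcrit hpsd₁ hpsdq hlt.ne' hne⟩
  · obtain ⟨hδ, hfq⟩ := eq_zero_and_secular_inv_div_nonpos hinj hγq.ne (by simp)
      (by rw [nhdsWithin_Ioo_eq_nhdsGT hlt]; infer_instance)
      fun lam hlam => div_nonpos_of_nonneg_of_nonpos (hf lam hlam) hγq.le
    have hne := lagrangianSet_inv_nonempty hm hinj hγq.ne hδ hfq
    exact ⟨minimizers_eq_lagrangianSet isSymm_Δ hpsdq hne,
      biUnion_lagrangianSet_eq_empty isSymm_Δ hcrit hpsd hpsdq (by simp) hne,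
      lagrangianSet_eq_empty_of_ne isSymm_Δ hcrit hpsdq hpsd₁ hlt.ne hne⟩

end CanonicalForm

theorem stmt19_general {q : ℕ} (hq : 0 < q) (γ : Fin q → ℝ) (hanti : StrictAnti γ)
    (hne : ∀ i, γ i ≠ 0) (hpos : 0 < γ ⟨0, hq⟩)
    (δ : Fin q → ℝ) (ε : ℝ) (kstar : ℝ)
    (m' : ℕ) (hm'le : m' ≤ 1) (hm' : ε = 0 ↔ m' = 0) :
    let i0 : Fin q := ⟨0, hq⟩
    let iq : Fin q := ⟨q - 1, Nat.sub_lt hq one_pos⟩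
    let Δ : Matrix (Fin m' ⊕ Fin q) (Fin m' ⊕ Fin q) ℝ :=
      Matrix.diagonal (Sum.elim (fun _ => (0 : ℝ)) γ)
    let d : Fin m' ⊕ Fin q → ℝ := Sum.elim (fun _ => ε) (fun _ => 0)
    let w0 : Fin m' ⊕ Fin q → ℝ := Sum.elim (fun _ => (0 : ℝ)) δ
    let W : Set (Fin m' ⊕ Fin q → ℝ) := {w | w ⬝ᵥ Δ.mulVec w + 2 * (d ⬝ᵥ w) = kstar}
    let L : (Fin m' ⊕ Fin q → ℝ) → ℝ := fun w => (w - w0) ⬝ᵥ (w - w0)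
    let M : Set (Fin m' ⊕ Fin q → ℝ) := {w ∈ W | ∀ w' ∈ W, L w ≤ L w'}
    let Λ : Set ℝ := if 0 < γ iq then Set.Iio (γ i0)⁻¹ else Set.Ioo (γ iq)⁻¹ (γ i0)⁻¹
    let f : ℝ → ℝ := fun lam =>
      (∑ i, γ i * δ i ^ 2 / (1 - lam * γ i) ^ 2) + 2 * ε ^ 2 * lam - kstar
    let Weq : ℝ → Set (Fin m' ⊕ Fin q → ℝ) := fun lam =>
      {w ∈ W | ((1 : Matrix (Fin m' ⊕ Fin q) (Fin m' ⊕ Fin q) ℝ) - lam • Δ).mulVec w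
          = w0 + lam • d}
    let Wcirc : Set (Fin m' ⊕ Fin q → ℝ) := ⋃ lam ∈ Λ, Weq lam
    let W1 : Set (Fin m' ⊕ Fin q → ℝ) := Weq (γ i0)⁻¹
    let Wq : Set (Fin m' ⊕ Fin q → ℝ) := Weq (γ iq)⁻¹
    W.Nonempty →
    ((ε = 0 ∧ kstar = 0 ∧ δ ≠ 0 ∧ γ iq < 0) ∨ (ε = 0 ∧ kstar ≠ 0) ∨ 0 < ε) →
      ((0 < γ iq →
          (∃ lam ∈ Λ, f lam < 0) ∧
          ((∃ lam ∈ Λ, 0 < f lam) → (M = Wcirc ∧ W1 = ∅)) ∧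
          ((∀ lam ∈ Λ, f lam ≤ 0) → (M = W1 ∧ Wcirc = ∅))) ∧
       (γ iq < 0 →
          (((∃ lam ∈ Λ, f lam < 0) ∧ (∃ lam ∈ Λ, 0 < f lam)) →
              (M = Wcirc ∧ W1 = ∅ ∧ Wq = ∅)) ∧
          ((∀ lam ∈ Λ, f lam ≤ 0) → (M = W1 ∧ Wcirc = ∅ ∧ Wq = ∅)) ∧
          ((∀ lam ∈ Λ, 0 ≤ f lam) → (M = Wq ∧ Wcirc = ∅ ∧ W1 = ∅)))) := by
  intro i0 iq Δ d w0 W L M Λ f Weq Wcirc W1 Wq hW hsingly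
  have hγ : ∀ i, γ i ∈ Icc (γ iq) (γ i0) := fun i =>
    ⟨hanti.antitone (Nat.le_sub_one_of_lt i.isLt), hanti.antitone (Nat.zero_le _)⟩
  have hm : (m' : ℝ) * ε ^ 2 = ε ^ 2 := by
    rcases Nat.le_one_iff_eq_zero_or_eq_one.1 hm'le with h | h
    · simp [hm'.2 h]
    · simp [h]
  have hcrit : ¬ (w0 ∈ W ∧ Δ *ᵥ w0 + d = 0) := fun h => by
    obtain ⟨hε0, hk0, hδ0⟩ := CanonicalForm.eq_zero_of_critical hne hm'.2 h
    rcases hsingly with ⟨-, -, hδ, -⟩ | ⟨-, hk⟩ | hε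
    · exact hδ hδ0
    · exact hk hk0
    · exact hε.ne' hε0
  refine ⟨fun hγq => ?_, fun hγq => ?_⟩
  · have hεk : 0 < ε ∨ 0 < kstar := by
      rcases hsingly with ⟨-, -, -, h⟩ | ⟨hε0, hk⟩ | h
      · exact absurd h hγq.not_gt
      · exact Or.inr ((CanonicalForm.zero_le_of_quadric_nonempty
          (fun i => hγq.le.trans (hγ i).1) hε0 hW).lt_of_ne' hk)
      · exact Or.inl h
    exact CanonicalForm.resolution_of_pos hm hanti.injective hcrit
      (fun i => ⟨hγq.trans_le (hγ i).1, (hγ i).2⟩) hεk (if_pos hγq)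
  · exact CanonicalForm.resolution_of_neg hm hanti.injective hcrit hγ hpos hγq (if_neg hγq.not_gt)

/-- Resolution of a singly-Lagrangian regular dimension-reduced canonical form
(coordinates `Fin m' ⊕ Fin q`, `m' = 0` iff `ε = 0`). With `W∘`, `W₁`, `W_q` the
potential Lagrangian solution sets and `M` the set of global minimisers of
`‖w − w₀‖²` over `W`: if `γ_q > 0` then `inf f < 0` and `M = W∘` or `M = W₁`
according as `sup f > 0` or `sup f ≤ 0` (the other set being empty); if `γ_q < 0`
then `M = W∘`, `W₁` or `W_q` according as `inf f < 0 < sup f`, `sup f ≤ 0` or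
`inf f ≥ 0` (the other two sets being empty). In particular exactly one of the
potential Lagrangian solution sets is nonempty and it equals `M`. -/
theorem stmt19 {q : ℕ} (hq : 0 < q) (γ : Fin q → ℝ) (hanti : StrictAnti γ)
    (hne : ∀ i, γ i ≠ 0) (hpos : 0 < γ ⟨0, hq⟩)
    (δ : Fin q → ℝ) (hδ : ∀ i, 0 ≤ δ i) (ε : ℝ) (hε : 0 ≤ ε) (kstar : ℝ)
    (m' : ℕ) (hm'le : m' ≤ 1) (hm' : ε = 0 ↔ m' = 0) :
    let i0 : Fin q := ⟨0, hq⟩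
    let iq : Fin q := ⟨q - 1, Nat.sub_lt hq one_pos⟩
    let Δ : Matrix (Fin m' ⊕ Fin q) (Fin m' ⊕ Fin q) ℝ :=
      Matrix.diagonal (Sum.elim (fun _ => (0 : ℝ)) γ)
    let d : Fin m' ⊕ Fin q → ℝ := Sum.elim (fun _ => ε) (fun _ => 0)
    let w0 : Fin m' ⊕ Fin q → ℝ := Sum.elim (fun _ => (0 : ℝ)) δ
    let W : Set (Fin m' ⊕ Fin q → ℝ) := {w | w ⬝ᵥ Δ.mulVec w + 2 * (d ⬝ᵥ w) = kstar}
    let L : (Fin m' ⊕ Fin q → ℝ) → ℝ := fun w => (w - w0) ⬝ᵥ (w - w0)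
    let M : Set (Fin m' ⊕ Fin q → ℝ) := {w ∈ W | ∀ w' ∈ W, L w ≤ L w'}
    let Λ : Set ℝ := if 0 < γ iq then Set.Iio (γ i0)⁻¹ else Set.Ioo (γ iq)⁻¹ (γ i0)⁻¹
    let f : ℝ → ℝ := fun lam =>
      (∑ i, γ i * δ i ^ 2 / (1 - lam * γ i) ^ 2) + 2 * ε ^ 2 * lam - kstar
    let Weq : ℝ → Set (Fin m' ⊕ Fin q → ℝ) := fun lam =>
      {w ∈ W | ((1 : Matrix (Fin m' ⊕ Fin q) (Fin m' ⊕ Fin q) ℝ) - lam • Δ).mulVec w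
          = w0 + lam • d}
    let Wcirc : Set (Fin m' ⊕ Fin q → ℝ) := ⋃ lam ∈ Λ, Weq lam
    let W1 : Set (Fin m' ⊕ Fin q → ℝ) := Weq (γ i0)⁻¹
    let Wq : Set (Fin m' ⊕ Fin q → ℝ) := Weq (γ iq)⁻¹
    W.Nonempty →
    ((ε = 0 ∧ kstar = 0 ∧ δ ≠ 0 ∧ γ iq < 0) ∨ (ε = 0 ∧ kstar ≠ 0) ∨ 0 < ε) →
      ((0 < γ iq →
          (∃ lam ∈ Λ, f lam < 0) ∧
          ((∃ lam ∈ Λ, 0 < f lam) → (M = Wcirc ∧ W1 = ∅)) ∧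
          ((∀ lam ∈ Λ, f lam ≤ 0) → (M = W1 ∧ Wcirc = ∅))) ∧
       (γ iq < 0 →
          (((∃ lam ∈ Λ, f lam < 0) ∧ (∃ lam ∈ Λ, 0 < f lam)) →
              (M = Wcirc ∧ W1 = ∅ ∧ Wq = ∅)) ∧
          ((∀ lam ∈ Λ, f lam ≤ 0) → (M = W1 ∧ Wcirc = ∅ ∧ Wq = ∅)) ∧
          ((∀ lam ∈ Λ, 0 ≤ f lam) → (M = Wq ∧ Wcirc = ∅ ∧ W1 = ∅)))) :=
  stmt19_general hq γ hanti hne hpos δ ε kstar m' hm'le hm'
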